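/- arXiv:2012.05165 — 4 statements merged into one kernel-verified Lean document; each statement's English description precedes it below -/
import Mathlib

section
/- For nonnegative integers h ≥ k and a complex number z, the squared modulus of the overlap ⟨ξ,h|μ,k⟩ of two displaced number states with z = μ − ξ equals (k!/h!)·|z|^(2(h−k))·e^(−|z|²)·[L_k^{(h−k)}(|z|²)]², where L_k^{(a)} is the generalized Laguerre polynomial. In particular this quantity always lies in the interval [0,1]. -/
/-!
Put `t = ‖z‖` and let `c_H` be the `H`-th Taylor coefficient of `z ↦ e^{tz} (z - t)^k`. Expanding
`(z - t)^k` gives `h! c_h = k! t^(h-k) L_k^(h-k)(t²)`, so the quantity is `e^(-t²) h! c_h² / k!`.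
For the Bargmann–Fock inner product `⟨f, g⟩ = ∑ H! f_H g_H` one has
`⟨e^{tz} p, e^{tz} q⟩ = e^{t²} ⟨p(z + t), q(z + t)⟩`: on monomials this is Vandermonde's identity
followed by `∑ j, C(j, r) y^j / j! = y^r e^y / r!`. With `p = q = (z - t)^k` the right-hand side
is `e^{t²} ⟨z^k, z^k⟩ = e^{t²} k!`, and the single term `H = h` of the left-hand side is at most
the whole sum.
-/

open Finset

/-- Generalized Laguerre polynomial `L_k^{(a)}(x) = ∑_{i=0}^k (-1)^i C(k+a, k-i) x^i / i!`. -/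
noncomputable def lag (k a : ℕ) (x : ℝ) : ℝ :=
  ∑ i ∈ Finset.range (k + 1), (-1 : ℝ) ^ i * ((k + a).choose (k - i)) * x ^ i / (Nat.factorial i)

open Polynomial Nat Real

theorem hasSum_of_hasSum_nat_add {G : Type*} [AddCommGroup G] [TopologicalSpace G]
    [IsTopologicalAddGroup G] {f : ℕ → G} {a : G} {r : ℕ} (hf : ∀ j < r, f j = 0)
    (h : HasSum (fun j => f (j + r)) a) : HasSum f a := by
  simpa [sum_eq_zero fun j hj => hf j (mem_range.mp hj)] using (hasSum_nat_add_iff r).mp h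

theorem hasSum_choose_mul_pow_div_factorial (r : ℕ) (y : ℝ) :
    HasSum (fun j => (j.choose r : ℝ) * y ^ j / j !) (y ^ r / r ! * exp y) := by
  have hexp : HasSum (fun j => y ^ j / j !) (exp y) := by
    rw [Real.exp_eq_exp_ℝ]
    exact NormedSpace.expSeries_div_hasSum_exp y
  refine hasSum_of_hasSum_nat_add (r := r) (fun j hj => by simp [Nat.choose_eq_zero_of_lt hj]) ?_
  have hshift : (fun j => ((j + r).choose r : ℝ) * y ^ (j + r) / (j + r)!)
      = fun j => y ^ r / r ! * (y ^ j / j !) := by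
    funext j
    rw [Nat.cast_choose ℝ (Nat.le_add_left r j), Nat.add_sub_cancel]
    field_simp
    ring
  rw [hshift]
  exact hexp.mul_left _

/-- The `H`-th Taylor coefficient of `z ↦ exp (t * z) * p z`. -/
noncomputable def expMulCoeff (t : ℝ) (p : ℝ[X]) (H : ℕ) : ℝ :=
  ∑ m ∈ range (H + 1), p.coeff m * (t ^ (H - m) / (H - m)!)

theorem expMulCoeff_add (t : ℝ) (p q : ℝ[X]) (H : ℕ) :
    expMulCoeff t (p + q) H = expMulCoeff t p H + expMulCoeff t q H := by
  simp only [expMulCoeff, coeff_add, add_mul, sum_add_distrib]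

theorem expMulCoeff_C_mul (t a : ℝ) (p : ℝ[X]) (H : ℕ) :
    expMulCoeff t (C a * p) H = a * expMulCoeff t p H := by
  simp only [expMulCoeff, coeff_C_mul, mul_sum, mul_assoc]

theorem expMulCoeff_X_pow (t : ℝ) (m H : ℕ) :
    expMulCoeff t (X ^ m) H = if m ≤ H then t ^ (H - m) / (H - m)! else 0 := by
  simp [expMulCoeff, coeff_X_pow]

noncomputable def bargmannInner (p q : ℝ[X]) : ℝ :=
  p.sum fun i a => (i ! : ℝ) * a * q.coeff i

theorem bargmannInner_eq_sum_range {p : ℝ[X]} (q : ℝ[X]) {N : ℕ} (hp : p.natDegree < N) :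
    bargmannInner p q = ∑ i ∈ range N, (i ! : ℝ) * p.coeff i * q.coeff i :=
  sum_over_range' p (fun _ => by simp) N hp

theorem bargmannInner_comm (p q : ℝ[X]) : bargmannInner p q = bargmannInner q p := by
  have hN := Nat.lt_succ_self (max p.natDegree q.natDegree)
  rw [bargmannInner_eq_sum_range q (lt_of_le_of_lt (le_max_left _ _) hN),
    bargmannInner_eq_sum_range p (lt_of_le_of_lt (le_max_right _ _) hN)]
  exact sum_congr rfl fun _ _ => by ring

theorem bargmannInner_add_left (p p' q : ℝ[X]) :
    bargmannInner (p + p') q = bargmannInner p q + bargmannInner p' q :=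
  sum_add_index p p' _ (fun _ => by simp) fun _ _ _ => by ring

theorem bargmannInner_add_right (p q q' : ℝ[X]) :
    bargmannInner p (q + q') = bargmannInner p q + bargmannInner p q' := by
  simp only [bargmannInner, coeff_add, mul_add]
  exact Polynomial.sum_add _ _ _

theorem bargmannInner_C_mul_left (a : ℝ) (p q : ℝ[X]) :
    bargmannInner (C a * p) q = a * bargmannInner p q := by
  rw [bargmannInner_eq_sum_range q ((natDegree_C_mul_le a p).trans_lt (Nat.lt_succ_self _)),
    bargmannInner_eq_sum_range q (Nat.lt_succ_self _), mul_sum]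
  exact sum_congr rfl fun _ _ => by rw [coeff_C_mul]; ring

theorem bargmannInner_C_mul_right (a : ℝ) (p q : ℝ[X]) :
    bargmannInner p (C a * q) = a * bargmannInner p q := by
  rw [bargmannInner_comm, bargmannInner_C_mul_left, bargmannInner_comm]

theorem bargmannInner_X_pow_self (k : ℕ) : bargmannInner (X ^ k) (X ^ k) = k ! := by
  simp [bargmannInner, ← monomial_one_right_eq_X_pow, sum_monomial_index]

theorem hasSum_expMulCoeff_X_pow_mul (t : ℝ) (m n : ℕ) :
    HasSum (fun H => (H ! : ℝ) * (expMulCoeff t (X ^ m) H * expMulCoeff t (X ^ n) H))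
      (exp (t ^ 2) * bargmannInner ((X + C t) ^ m) ((X + C t) ^ n)) := by
  wlog hmn : m ≤ n generalizing m n
  · simpa only [mul_comm (expMulCoeff t (X ^ m) _), bargmannInner_comm]
      using this n m (le_of_not_ge hmn)
  obtain ⟨d, rfl⟩ := Nat.exists_eq_add_of_le hmn
  refine hasSum_of_hasSum_nat_add (r := m + d) (fun H hH => by simp [expMulCoeff_X_pow, hH]) ?_
  have hterm : ∀ j, ((j + (m + d))! : ℝ) *
      (expMulCoeff t (X ^ m) (j + (m + d)) * expMulCoeff t (X ^ (m + d)) (j + (m + d)))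
      = ∑ i ∈ range (m + 1),
          (m ! * ((m + d).choose i) * t ^ d) * ((j.choose (m - i) : ℝ) * (t ^ 2) ^ j / j !) := by
    intro j
    have hvandermonde : ∑ i ∈ range (m + 1), ((m + d).choose i : ℝ) * (j.choose (m - i))
        = ((m + d + j).choose m : ℝ) := by
      rw [Nat.add_choose_eq, Finset.Nat.sum_antidiagonal_eq_sum_range_succ
        (fun a b => (m + d).choose a * j.choose b)]
      push_cast
      rfl
    rw [expMulCoeff_X_pow, expMulCoeff_X_pow, if_pos (by omega), if_pos (by omega),
      show j + (m + d) - m = j + d by omega, show j + (m + d) - (m + d) = j by omega]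
    calc ((j + (m + d))! : ℝ) * (t ^ (j + d) / (j + d)! * (t ^ j / j !))
        = m ! * t ^ d * (t ^ 2) ^ j / j ! * ((m + d + j).choose m) := by
          rw [Nat.cast_choose ℝ (show m ≤ m + d + j by omega),
            show m + d + j - m = j + d by omega, show m + d + j = j + (m + d) by omega]
          field_simp
          ring
      _ = _ := by
          rw [← hvandermonde, mul_sum]
          exact sum_congr rfl fun _ _ => by ring
  have hvalue : exp (t ^ 2) * bargmannInner ((X + C t) ^ m) ((X + C t) ^ (m + d))
      = ∑ i ∈ range (m + 1),
          (m ! * ((m + d).choose i) * t ^ d) * ((t ^ 2) ^ (m - i) / (m - i)! * exp (t ^ 2)) := by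
    rw [bargmannInner_eq_sum_range _ (by rw [natDegree_pow_X_add_C]; exact Nat.lt_succ_self m),
      mul_sum]
    refine sum_congr rfl fun i hi => ?_
    obtain ⟨e, rfl⟩ := Nat.exists_eq_add_of_le (Nat.lt_succ_iff.mp (mem_range.mp hi))
    rw [coeff_X_add_C_pow, coeff_X_add_C_pow, Nat.cast_choose ℝ (Nat.le_add_right i e),
      show i + e - i = e by omega, show i + e + d - i = e + d by omega]
    field_simp
    ring
  rw [funext hterm, hvalue]
  exact hasSum_sum fun i _ => (hasSum_choose_mul_pow_div_factorial (m - i) (t ^ 2)).mul_left _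

theorem hasSum_expMulCoeff_mul (t : ℝ) (p q : ℝ[X]) :
    HasSum (fun H => (H ! : ℝ) * (expMulCoeff t p H * expMulCoeff t q H))
      (exp (t ^ 2) * bargmannInner (taylor t p) (taylor t q)) := by
  induction p using Polynomial.induction_on' with
  | add p p' hp hp' =>
    simp only [expMulCoeff_add, map_add, bargmannInner_add_left, add_mul, mul_add]
    exact hp.add hp'
  | monomial m a =>
    induction q using Polynomial.induction_on' with
    | add q q' hq hq' =>
      simp only [expMulCoeff_add, map_add, bargmannInner_add_right, mul_add]
      exact hq.add hq'
    | monomial n b =>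
      rw [taylor_monomial, taylor_monomial, bargmannInner_C_mul_left, bargmannInner_C_mul_right,
        ← C_mul_X_pow_eq_monomial, ← C_mul_X_pow_eq_monomial]
      simp only [expMulCoeff_C_mul]
      simpa only [mul_comm, mul_assoc, mul_left_comm]
        using (hasSum_expMulCoeff_X_pow_mul t m n).mul_left (a * b)

theorem coeff_X_sub_C_pow {R : Type*} [CommRing R] (r : R) (k m : ℕ) :
    ((X - C r) ^ k).coeff m = (-r) ^ (k - m) * k.choose m := by
  rw [sub_eq_add_neg, ← C_neg, coeff_X_add_C_pow]

theorem taylor_X_sub_C_pow {R : Type*} [CommRing R] (r : R) (k : ℕ) :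
    taylor r ((X - C r) ^ k) = X ^ k := by
  simp [taylor_pow]

theorem hasSum_expMulCoeff_X_sub_C_pow_mul_self (t : ℝ) (k : ℕ) :
    HasSum (fun H => (H ! : ℝ) *
        (expMulCoeff t ((X - C t) ^ k) H * expMulCoeff t ((X - C t) ^ k) H))
      (exp (t ^ 2) * k !) := by
  have h := hasSum_expMulCoeff_mul t ((X - C t) ^ k) ((X - C t) ^ k)
  rwa [taylor_X_sub_C_pow, bargmannInner_X_pow_self] at h

theorem factorial_mul_expMulCoeff_X_sub_C_pow (t : ℝ) {h k : ℕ} (hk : k ≤ h) :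
    (h ! : ℝ) * expMulCoeff t ((X - C t) ^ k) h = k ! * t ^ (h - k) * lag k (h - k) (t ^ 2) := by
  obtain ⟨a, rfl⟩ := Nat.exists_eq_add_of_le hk
  have hvanish : ∀ m ∈ range (k + a + 1), m ∉ range (k + 1) →
      ((X - C t) ^ k).coeff m * (t ^ (k + a - m) / (k + a - m)!) = 0 := by
    intro m _ hm
    rw [coeff_X_sub_C_pow, Nat.choose_eq_zero_of_lt (by simpa using hm)]
    simp
  rw [expMulCoeff, lag, Nat.add_sub_cancel_left,
    ← sum_subset (range_subset_range.mpr (by omega)) hvanish, mul_sum, mul_sum,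
    ← sum_range_reflect]
  refine sum_congr rfl fun i hi => ?_
  obtain ⟨e, rfl⟩ := Nat.exists_eq_add_of_le' (Nat.lt_succ_iff.mp (mem_range.mp hi))
  rw [coeff_X_sub_C_pow, show e + i + 1 - 1 - i = e by omega, show e + i - e = i by omega,
    show e + i + a - e = i + a by omega, show e + i - i = e by omega, Nat.cast_add_choose,
    show e + i + a = e + (i + a) by omega, Nat.cast_add_choose, neg_pow, ← pow_mul]
  field_simp
  ring

theorem factorial_div_mul_pow_mul_exp_mul_lag_sq_le_one (t : ℝ) {h k : ℕ} (hk : k ≤ h) :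
    (k ! : ℝ) / h ! * t ^ (2 * (h - k)) * exp (-t ^ 2) * lag k (h - k) (t ^ 2) ^ 2 ≤ 1 := by
  set c := expMulCoeff t ((X - C t) ^ k) h
  have hterm_le : (h ! : ℝ) * (c * c) ≤ exp (t ^ 2) * k ! :=
    le_hasSum (hasSum_expMulCoeff_X_sub_C_pow_mul_self t k) h fun j _ =>
      mul_nonneg (Nat.cast_nonneg _) (mul_self_nonneg _)
  have hc := factorial_mul_expMulCoeff_X_sub_C_pow t hk
  calc (k ! : ℝ) / h ! * t ^ (2 * (h - k)) * exp (-t ^ 2) * lag k (h - k) (t ^ 2) ^ 2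
      = exp (-t ^ 2) / k ! * (h ! * (c * c)) := by
        rw [pow_mul]
        field_simp
        linear_combination (-(h ! : ℝ) * c - k ! * t ^ (h - k) * lag k (h - k) (t ^ 2)) * hc
    _ ≤ exp (-t ^ 2) / k ! * (exp (t ^ 2) * k !) := by gcongr
    _ = 1 := by
        rw [Real.exp_neg]
        field_simp

/-- The squared modulus of the overlap of two displaced number states `|ξ,h⟩`, `|μ,k⟩`
(`h ≥ k`, `z = μ - ξ`) equals `(k!/h!)·|z|^(2(h-k))·e^(-|z|²)·(L_k^{(h-k)}(|z|²))²`,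
and this quantity always lies in `[0,1]`. -/
theorem overlap_sq_mem_Icc (h k : ℕ) (hk : k ≤ h) (z : ℂ) :
    (Nat.factorial k : ℝ) / (Nat.factorial h) * (‖z‖) ^ (2 * (h - k)) *
      Real.exp (-(‖z‖) ^ 2) * (lag k (h - k) ((‖z‖) ^ 2)) ^ 2
      ∈ Set.Icc (0 : ℝ) 1 :=
  ⟨by positivity, factorial_div_mul_pow_mul_exp_mul_lag_sq_le_one ‖z‖ hk⟩
end

section
/- The mean of the photon-number distribution of the photon-added thermal state ρ(0,k) equals k·(n_t+1) + n_t; i.e., Σ_{n=k}^{∞} n·C(n,k)·n_t^(n−k)/(n_t+1)^(n+1) = k·(n_t+1) + n_t. -/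
/-!
With `r = n_t / (n_t + 1)` the `n`-th term is `n C(n,k) r^n / (n_t^k (n_t + 1))`, also for `n < k`
where both vanish. The identity `n C(n,k) = k C(n,k) + (k+1) C(n,k+1)` splits the mean into two
negative binomial series `∑ C(n,j) r^n = r^j / (1 - r)^(j+1)`, and `1 - r = 1 / (n_t + 1)`.
-/

theorem Nat.mul_choose_eq_add_succ_mul_choose_succ (n k : ℕ) :
    n * n.choose k = k * n.choose k + (k + 1) * n.choose (k + 1) := by
  rcases lt_or_ge n k with hnk | hkn
  · simp [Nat.choose_eq_zero_of_lt hnk, Nat.choose_eq_zero_of_lt (hnk.trans k.lt_succ_self)]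
  · rw [mul_comm (k + 1), Nat.choose_succ_right_eq, mul_comm (n.choose k), ← add_mul,
      Nat.add_sub_cancel' hkn]

section

variable {𝕜 : Type*} [NormedField 𝕜] {r : 𝕜}

theorem hasSum_choose_mul_geometric (k : ℕ) (hr : ‖r‖ < 1) :
    HasSum (fun n ↦ (n.choose k : 𝕜) * r ^ n) (r ^ k / (1 - r) ^ (k + 1)) := by
  have hprefix : ∑ i ∈ Finset.range k, (i.choose k : 𝕜) * r ^ i = 0 :=
    Finset.sum_eq_zero fun i hi ↦ by
      rw [Nat.choose_eq_zero_of_lt (Finset.mem_range.mp hi), Nat.cast_zero, zero_mul]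
  rw [← hasSum_nat_add_iff' k, hprefix, sub_zero, div_eq_mul_one_div]
  exact ((hasSum_choose_mul_geometric_of_norm_lt_one k hr).mul_left (r ^ k)).congr_fun
    fun n ↦ by ring

theorem hasSum_mul_choose_mul_geometric (k : ℕ) (hr : ‖r‖ < 1) :
    HasSum (fun n : ℕ ↦ (n : 𝕜) * n.choose k * r ^ n) (r ^ k * (k + r) / (1 - r) ^ (k + 2)) := by
  have h1r : 1 - r ≠ 0 := sub_ne_zero.mpr fun h ↦ by simp [← h] at hr
  have hsum : r ^ k * (k + r) / (1 - r) ^ (k + 2)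
      = k * (r ^ k / (1 - r) ^ (k + 1)) + (k + 1) * (r ^ (k + 1) / (1 - r) ^ (k + 1 + 1)) := by
    field_simp
    ring
  rw [hsum]
  refine (((hasSum_choose_mul_geometric k hr).mul_left (k : 𝕜)).add
    ((hasSum_choose_mul_geometric (k + 1) hr).mul_left ((k : 𝕜) + 1))).congr_fun fun n ↦ ?_
  have := congrArg (Nat.cast : ℕ → 𝕜) (Nat.mul_choose_eq_add_succ_mul_choose_succ n k)
  push_cast at this
  linear_combination r ^ n * this

end

/-- The mean photon number of the photon-added thermal state `ρ(0,k)` equals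
`k(n_t+1) + n_t`. (Terms with `n < k` vanish since `C(n,k) = 0`.) -/
theorem photon_added_thermal_mean (k : ℕ) (nt : ℝ) (hnt : 0 < nt) :
    ∑' n : ℕ, (n : ℝ) * (n.choose k) * nt ^ (n - k) / (nt + 1) ^ (n + 1)
      = k * (nt + 1) + nt := by
  have hr : ‖nt / (nt + 1)‖ < 1 := by
    rw [Real.norm_of_nonneg (by positivity), div_lt_one (by positivity)]
    linarith
  have hterm (n : ℕ) : (n : ℝ) * n.choose k * nt ^ (n - k) / (nt + 1) ^ (n + 1)
      = n * n.choose k * (nt / (nt + 1)) ^ n / (nt ^ k * (nt + 1)) := by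
    rcases lt_or_ge n k with hnk | hkn
    · simp [Nat.choose_eq_zero_of_lt hnk]
    · rw [pow_sub₀ nt hnt.ne' hkn, div_pow]
      field_simp
      ring
  have h1r : 1 - nt / (nt + 1) = (nt + 1)⁻¹ := by field_simp; ring
  simp_rw [hterm]
  rw [((hasSum_mul_choose_mul_geometric k hr).div_const _).tsum_eq, h1r, div_pow, inv_pow]
  field_simp
  ring
end

section
/- Let h > k ≥ 0 be integers, n_t > 0, and p₀, p₁ > 0 with p₀ + p₁ = 1. Define λ_n = p₁·C(n,k)·n_t^(n−k)/(n_t+1)^(n+1) − p₀·C(n,h)·n_t^(n−h)/(n_t+1)^(n+1) for n ≥ h (with the convention that for k ≤ n < h, λ_n = p₁·C(n,k)·n_t^(n−k)/(n_t+1)^(n+1), and λ_n = 0 for n < k). Then if λ_n < 0 for some n ≥ h, it follows that λ_{n+1} < 0. -/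
/-! For `n ≥ h`, `λ_n` has the sign of `A_n - B_n`, where `A_n = p₁ C(n,k) n_t^(n-k)` and
`B_n = p₀ C(n,h) n_t^(n-h)`. Passing from `n` to `n + 1` multiplies `C(n,j) n_t^(n-j)` by
`(n+1) n_t / (n+1-j)`, a factor increasing in `j`; since `h > k`, `B` grows strictly faster than
`A`, so once `A_n < B_n` the inequality persists. -/

noncomputable def lam (k h : ℕ) (nt p0 p1 : ℝ) (n : ℕ) : ℝ :=
  if n < k then 0
  else if n < h then p1 * (n.choose k) * nt ^ (n - k) / (nt + 1) ^ (n + 1)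
  else p1 * (n.choose k) * nt ^ (n - k) / (nt + 1) ^ (n + 1)
    - p0 * (n.choose h) * nt ^ (n - h) / (nt + 1) ^ (n + 1)

theorem choose_succ_mul_pow_mul_sub {R : Type*} [CommSemiring R] (x : R) {n j : ℕ} (hj : j ≤ n) :
    ((n + 1).choose j : R) * x ^ (n + 1 - j) * ((n + 1 - j : ℕ) : R)
      = (n.choose j : R) * x ^ (n - j) * ((n + 1 : ℕ) * x) := by
  rw [Nat.sub_add_comm hj, pow_succ]
  calc ((n + 1).choose j : R) * (x ^ (n - j) * x) * ((n - j + 1 : ℕ) : R)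
      = (((n + 1).choose j * (n + 1 - j) : ℕ) : R) * (x ^ (n - j) * x) := by
        rw [Nat.sub_add_comm hj, Nat.cast_mul]; ring
    _ = ((n.choose j * (n + 1) : ℕ) : R) * (x ^ (n - j) * x) := by
        rw [Nat.choose_mul_succ_eq]
    _ = (n.choose j : R) * x ^ (n - j) * ((n + 1 : ℕ) * x) := by
        rw [Nat.cast_mul]; ring

theorem choose_mul_pow_lt_succ {x a b : ℝ} (hx : 0 < x) (ha : 0 ≤ a) {n j j' : ℕ}
    (hjj' : j < j') (hj' : j' ≤ n)
    (h : a * n.choose j * x ^ (n - j) < b * n.choose j' * x ^ (n - j')) :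
    a * (n + 1).choose j * x ^ (n + 1 - j) < b * (n + 1).choose j' * x ^ (n + 1 - j') := by
  have hpos : (0 : ℝ) < ((n + 1 - j' : ℕ) : ℝ) := by exact_mod_cast (by omega : 0 < n + 1 - j')
  refine lt_of_mul_lt_mul_right ?_ hpos.le
  calc a * (n + 1).choose j * x ^ (n + 1 - j) * ((n + 1 - j' : ℕ) : ℝ)
      ≤ a * (n + 1).choose j * x ^ (n + 1 - j) * ((n + 1 - j : ℕ) : ℝ) := by
        gcongr
    _ = a * n.choose j * x ^ (n - j) * ((n + 1 : ℕ) * x) := by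
        linear_combination a * choose_succ_mul_pow_mul_sub x (n := n) (j := j) (by omega)
    _ < b * n.choose j' * x ^ (n - j') * ((n + 1 : ℕ) * x) :=
        mul_lt_mul_of_pos_right h (by positivity)
    _ = b * (n + 1).choose j' * x ^ (n + 1 - j') * ((n + 1 - j' : ℕ) : ℝ) := by
        linear_combination -b * choose_succ_mul_pow_mul_sub x hj'

theorem lam_neg_iff {k h n : ℕ} {nt p0 p1 : ℝ} (hnt : 0 < nt + 1) (hk : k ≤ n) (hh : h ≤ n) :
    lam k h nt p0 p1 n < 0 ↔ p1 * n.choose k * nt ^ (n - k) < p0 * n.choose h * nt ^ (n - h) := by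
  rw [lam, if_neg (not_lt.2 hk), if_neg (not_lt.2 hh), div_sub_div_same,
    div_lt_iff₀ (pow_pos hnt _), zero_mul, sub_neg]

theorem lam_neg_step_general (k h : ℕ) (hkh : k < h) (nt p0 p1 : ℝ) (hnt : 0 < nt)
    (hp1 : 0 < p1)
    (n : ℕ) (hn : h ≤ n) (hneg : lam k h nt p0 p1 n < 0) :
    lam k h nt p0 p1 (n + 1) < 0 := by
  have hnt1 : 0 < nt + 1 := by positivity
  rw [lam_neg_iff hnt1 (by omega) (by omega)] at hneg ⊢
  exact choose_mul_pow_lt_succ hnt hp1.le hkh hn hneg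

/-- Once the eigenvalue sequence becomes negative it stays negative:
if `λ_n < 0` for some `n ≥ h` then `λ_{n+1} < 0`. -/
theorem lam_neg_step (k h : ℕ) (hkh : k < h) (nt p0 p1 : ℝ) (hnt : 0 < nt)
    (hp0 : 0 < p0) (hp1 : 0 < p1) (hp : p0 + p1 = 1)
    (n : ℕ) (hn : h ≤ n) (hneg : lam k h nt p0 p1 n < 0) :
    lam k h nt p0 p1 (n + 1) < 0 :=
  lam_neg_step_general k h hkh nt p0 p1 hnt hp1 n hn hneg
end

section
/- Let h > k ≥ 0 be integers, n_t > 0, and p₀, p₁ > 0 with p₀+p₁ = 1. Then there exists a threshold n_th ∈ ℕ (with n_th ≥ h−1 possible) such that λ_n ≥ 0 for all n ≤ n_th and λ_n < 0 for all n > n_th, where λ_n is the eigenvalue sequence λ_n = 0 for n < k, λ_n = p₁·C(n,k)·n_t^(n−k)/(n_t+1)^(n+1) for k ≤ n < h, and λ_n = [p₁·C(n,k)·n_t^(h−k) − p₀·C(n,h)]·n_t^(n−h)/(n_t+1)^(n+1) for n ≥ h. Moreover n_th is the maximum n satisfying C(n,k)·n_t^(h−k) ≥ (p₀/p₁)·C(n,h).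 -/
namespace Nat

theorem succ_le_choose_add {t j : ℕ} (hj : 1 ≤ j) : t + 1 ≤ (t + j).choose j := by
  rw [← choose_symm_add, ← choose_succ_self_right t]
  exact choose_le_choose t (by omega)

theorem choose_mul_choose_succ_le {k h : ℕ} (hkh : k ≤ h) (n : ℕ) :
    n.choose h * (n + 1).choose k ≤ (n + 1).choose h * n.choose k := by
  refine Nat.le_of_mul_le_mul_right ?_ n.succ_pos
  calc n.choose h * (n + 1).choose k * (n + 1)
      = (n + 1).choose h * (n + 1).choose k * (n + 1 - h) := by
        rw [mul_right_comm, choose_mul_succ_eq]; ring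
    _ ≤ (n + 1).choose h * (n + 1).choose k * (n + 1 - k) := by gcongr
    _ = (n + 1).choose h * n.choose k * (n + 1) := by
        rw [mul_assoc, mul_assoc, ← choose_mul_succ_eq, mul_comm (n.choose k)]

end Nat

section ChooseThreshold

variable {R : Type*} {k h : ℕ} {a c : R}

theorem antitone_mul_choose_le_choose_mul [CommSemiring R] [LinearOrder R] [IsStrictOrderedRing R]
    (hkh : k ≤ h) (ha : 0 ≤ a) (hc : 0 ≤ c) :
    Antitone fun n : ℕ => c * (n.choose h : R) ≤ (n.choose k : R) * a := by
  refine antitone_nat_of_succ_le fun n (hsucc : c * _ ≤ _ * a) => ?_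
  show c * (n.choose h : R) ≤ (n.choose k : R) * a
  rcases Nat.eq_zero_or_pos ((n + 1).choose k) with hzero | hpos
  · have : n.choose h = 0 :=
      Nat.choose_eq_zero_of_lt (by have := Nat.choose_eq_zero_iff.1 hzero; omega)
    rw [this, Nat.cast_zero, mul_zero]
    positivity
  have hmono : (n.choose h : R) * (n + 1).choose k ≤ ((n + 1).choose h : R) * n.choose k := by
    exact_mod_cast Nat.choose_mul_choose_succ_le hkh n
  refine le_of_mul_le_mul_right ?_ (show (0 : R) < (n + 1).choose k by exact_mod_cast hpos)
  calc c * (n.choose h : R) * (n + 1).choose k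
      ≤ c * (((n + 1).choose h : R) * n.choose k) := by
        rw [mul_assoc]; exact mul_le_mul_of_nonneg_left hmono hc
    _ ≤ ((n + 1).choose k : R) * a * n.choose k := by
        rw [← mul_assoc, mul_comm _ (n.choose k : R), mul_comm ((n + 1).choose k * a)]
        exact mul_le_mul_of_nonneg_left hsucc (by positivity)
    _ = (n.choose k : R) * a * (n + 1).choose k := by ring

theorem exists_choose_mul_lt_mul_choose [Field R] [LinearOrder R] [IsStrictOrderedRing R]
    [Archimedean R] (hkh : k < h) (hc : 0 < c) (a : R) :
    ∃ N : ℕ, (N.choose k : R) * a < c * N.choose h := by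
  obtain ⟨t, ht⟩ := exists_nat_gt (a * h.choose k / c)
  refine ⟨h + t, ?_⟩
  have hhk : (0 : R) < h.choose k := by exact_mod_cast Nat.choose_pos hkh.le
  have hNk : (0 : R) < (h + t).choose k := by exact_mod_cast Nat.choose_pos (by omega)
  have hfactor : (h + t).choose k * (t + 1) ≤ (h + t).choose h * h.choose k := by
    rw [Nat.choose_mul hkh.le, show h + t - k = t + (h - k) by omega]
    exact Nat.mul_le_mul_left _ (Nat.succ_le_choose_add (by omega))
  have hfactor' : ((h + t).choose k : R) * (t + 1) ≤ ((h + t).choose h : R) * h.choose k := by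
    exact_mod_cast hfactor
  have ht' : a * h.choose k < c * (t + 1) := by
    rw [div_lt_iff₀ hc] at ht; linarith
  refine lt_of_mul_lt_mul_right ?_ hhk.le
  calc ((h + t).choose k : R) * a * h.choose k
      = ((h + t).choose k : R) * (a * h.choose k) := by ring
    _ < ((h + t).choose k : R) * (c * (t + 1)) := mul_lt_mul_of_pos_left ht' hNk
    _ = c * (((h + t).choose k : R) * (t + 1)) := by ring
    _ ≤ c * (((h + t).choose h : R) * h.choose k) := mul_le_mul_of_nonneg_left hfactor' hc.le
    _ = c * ((h + t).choose h : R) * h.choose k := by ring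

end ChooseThreshold

theorem Antitone.exists_forall_iff_le {P : ℕ → Prop} (hP : Antitone P) (h0 : P 0)
    (hfails : ∃ N, ¬ P N) : ∃ m, ∀ n, P n ↔ n ≤ m := by
  classical
  have hfind_pos : 0 < Nat.find hfails :=
    Nat.pos_of_ne_zero fun h => Nat.find_spec hfails (h ▸ h0)
  refine ⟨Nat.find hfails - 1, fun n => ⟨fun hn => ?_, fun hn => ?_⟩⟩
  · by_contra hlt
    exact Nat.find_spec hfails (hP (by omega) hn)
  · exact not_not.1 (Nat.find_min hfails (by omega))

theorem lam_of_le {k h : ℕ} (hkh : k ≤ h) (nt p0 p1 : ℝ) {n : ℕ} (hn : h ≤ n) :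
    lam k h nt p0 p1 n =
      (p1 * n.choose k * nt ^ (h - k) - p0 * n.choose h) * nt ^ (n - h) / (nt + 1) ^ (n + 1) := by
  rw [lam, if_neg (by omega), if_neg (by omega), div_sub_div_same,
    show n - k = (h - k) + (n - h) by omega, pow_add]
  ring

theorem lam_nonneg_iff {k h : ℕ} (hkh : k ≤ h) {nt p0 p1 : ℝ} (hnt : 0 < nt) (hp1 : 0 < p1)
    (n : ℕ) :
    0 ≤ lam k h nt p0 p1 n ↔
      (p0 / p1) * (n.choose h : ℝ) ≤ (n.choose k : ℝ) * nt ^ (h - k) := by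
  rcases lt_or_ge n h with hnh | hhn
  · rw [Nat.choose_eq_zero_of_lt hnh, Nat.cast_zero, mul_zero]
    refine iff_of_true ?_ (by positivity)
    unfold lam
    split_ifs <;> positivity
  · rw [lam_of_le hkh nt p0 p1 hhn, le_div_iff₀ (by positivity), zero_mul,
      mul_nonneg_iff_of_pos_right (by positivity), sub_nonneg, div_mul_eq_mul_div,
      div_le_iff₀ hp1]
    constructor <;> intro hle <;> linarith

theorem optimal_threshold_exists_general (k h : ℕ) (hkh : k < h) (nt p0 p1 : ℝ)
    (hnt : 0 < nt) (hp0 : 0 < p0) (hp1 : 0 < p1) :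
    ∃ nth : ℕ,
      (∀ n ≤ nth, 0 ≤ lam k h nt p0 p1 n) ∧
      (∀ n, nth < n → lam k h nt p0 p1 n < 0) ∧
      IsGreatest {n : ℕ | (p0 / p1) * (n.choose h : ℝ) ≤ (n.choose k : ℝ) * nt ^ (h - k)} nth := by
  have hantitone := antitone_mul_choose_le_choose_mul (R := ℝ) hkh.le
    (pow_pos hnt (h - k)).le (div_pos hp0 hp1).le
  have hzero :
      (p0 / p1) * ((0 : ℕ).choose h : ℝ) ≤ ((0 : ℕ).choose k : ℝ) * nt ^ (h - k) := by
    rw [Nat.choose_eq_zero_of_lt (by omega), Nat.cast_zero, mul_zero]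
    positivity
  obtain ⟨N, hN⟩ := exists_choose_mul_lt_mul_choose hkh (div_pos hp0 hp1) (nt ^ (h - k))
  obtain ⟨nth, hnth⟩ := hantitone.exists_forall_iff_le hzero ⟨N, not_le.2 hN⟩
  have hsign n : 0 ≤ lam k h nt p0 p1 n ↔ n ≤ nth :=
    (lam_nonneg_iff hkh.le hnt hp1 n).trans (hnth n)
  exact ⟨nth, fun n hn => (hsign n).2 hn,
    fun n hn => not_le.1 fun hle => hn.not_ge ((hsign n).1 hle),
    (hnth nth).2 le_rfl, fun n hn => (hnth n).1 hn⟩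

/-- Existence and characterization of the optimal Kennedy detection threshold:
there is `n_th` with `λ_n ≥ 0` for `n ≤ n_th` and `λ_n < 0` for `n > n_th`, and
`n_th` is the maximum `n` with `C(n,k)·n_t^(h−k) ≥ (p₀/p₁)·C(n,h)`. -/
theorem optimal_threshold_exists (k h : ℕ) (hkh : k < h) (nt p0 p1 : ℝ)
    (hnt : 0 < nt) (hp0 : 0 < p0) (hp1 : 0 < p1) (hp : p0 + p1 = 1) :
    ∃ nth : ℕ,
      (∀ n ≤ nth, 0 ≤ lam k h nt p0 p1 n) ∧
      (∀ n, nth < n → lam k h nt p0 p1 n < 0) ∧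
      IsGreatest {n : ℕ | (p0 / p1) * (n.choose h : ℝ) ≤ (n.choose k : ℝ) * nt ^ (h - k)} nth :=
  optimal_threshold_exists_general k h hkh nt p0 p1 hnt hp0 hp1
end
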